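/- arXiv:0907.2510 — 4 statements merged into one kernel-verified Lean document; each statement's English description precedes it below -/
import Mathlib

section
/- Let K be a positive integer and let p : {1,…,K} × {1,…,K} → ℝ satisfy 0 ≤ p(j,i) ≤ 1 for all j,i and p(k,k) = 1/2 for every k. Define w(H) = ∏_{j,i} (p(j,i) if H_{j,i} = 1 else 1 − p(j,i)) for H ∈ F₂^{K×K}. Then ∑_{H ∈ F₂^{K×K}} min{w(H), w(H + I)} = 1, where I is the K×K identity matrix over F₂ and the sum ranges over all 2^{K²} matrices. -/
/-!
Since `p k k = 1/2`, flipping a diagonal entry of `H` does not change its weight, so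
`w (H + I) = w H` and every minimum equals `w H`. The weights are those of independent
Bernoulli entries, so they sum to one.
-/

open Finset

theorem Fintype.sum_prod_prod_apply {m n α : Type*} [Fintype m] [DecidableEq m] [Fintype n]
    [DecidableEq n] [Fintype α] (f : m → n → α → ℝ) :
    ∑ H : m → n → α, ∏ j, ∏ i, f j i (H j i) = ∏ j, ∏ i, ∑ x, f j i x := by
  simp_rw [Fintype.prod_sum]

def bernoulliWeight (q : ℝ) (x : ZMod 2) : ℝ := if x = 1 then q else 1 - q

theorem bernoulliWeight_half (x : ZMod 2) : bernoulliWeight (1 / 2) x = 1 / 2 := by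
  unfold bernoulliWeight; split_ifs <;> norm_num

theorem sum_bernoulliWeight (q : ℝ) : ∑ x, bernoulliWeight q x = 1 := by
  rw [show (univ : Finset (ZMod 2)) = {0, 1} from rfl]
  simp [bernoulliWeight]

def channelWeight {m n : Type*} [Fintype m] [Fintype n] (p : m → n → ℝ)
    (H : Matrix m n (ZMod 2)) : ℝ :=
  ∏ j, ∏ i, bernoulliWeight (p j i) (H j i)

theorem sum_channelWeight {m n : Type*} [Fintype m] [DecidableEq m] [Fintype n]
    [DecidableEq n] (p : m → n → ℝ) : ∑ H, channelWeight p H = 1 := by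
  calc ∑ H, channelWeight p H = ∏ j, ∏ i, ∑ x, bernoulliWeight (p j i) x :=
        Fintype.sum_prod_prod_apply fun j i => bernoulliWeight (p j i)
    _ = 1 := by simp only [sum_bernoulliWeight, prod_const_one]

theorem channelWeight_add_one {n : Type*} [Fintype n] [DecidableEq n] {p : n → n → ℝ}
    (hp : ∀ k, p k k = 1 / 2) (H : Matrix n n (ZMod 2)) :
    channelWeight p (H + 1) = channelWeight p H := by
  refine prod_congr rfl fun j _ => prod_congr rfl fun i _ => ?_
  obtain rfl | hji := eq_or_ne j i
  · simp only [hp, bernoulliWeight_half]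
  · simp [Matrix.one_apply_ne hji]

theorem sum_min_weight_eq_one_general (K : ℕ) (p : Fin K → Fin K → ℝ)
    (hp : ∀ k, p k k = 1 / 2) :
    ∑ H : Matrix (Fin K) (Fin K) (ZMod 2),
      min (∏ j : Fin K, ∏ i : Fin K, if H j i = 1 then p j i else 1 - p j i)
        (∏ j : Fin K, ∏ i : Fin K, if (H + 1) j i = 1 then p j i else 1 - p j i)
      = 1 := by
  change ∑ H, min (channelWeight p H) (channelWeight p (H + 1)) = 1
  simp_rw [channelWeight_add_one hp, min_self]
  exact sum_channelWeight p

/-- When the direct channel probabilities equal `1/2`, the total weight of the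
paper's block Markov pairing (pairing each channel instance `H` with `H + I`)
sums to one, so each user achieves rate `1/2`. -/
theorem sum_min_weight_eq_one (K : ℕ) (hK : 0 < K) (p : Fin K → Fin K → ℝ)
    (hp0 : ∀ j i, 0 ≤ p j i) (hp1 : ∀ j i, p j i ≤ 1)
    (hp : ∀ k, p k k = 1 / 2) :
    ∑ H : Matrix (Fin K) (Fin K) (ZMod 2),
      min (∏ j : Fin K, ∏ i : Fin K, if H j i = 1 then p j i else 1 - p j i)
        (∏ j : Fin K, ∏ i : Fin K, if (H + 1) j i = 1 then p j i else 1 - p j i)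
      = 1 :=
  sum_min_weight_eq_one_general K p hp
end

section
/- Let K, K', r be positive integers with r ≤ K and r ≤ K', let G ∈ F₂^{r×r} be invertible, and fix injections ρ : {1,…,r} ↪ {1,…,K'} and σ : {1,…,r} ↪ {1,…,K}. Then the number of matrices H ∈ F₂^{K'×K} such that rank(H) = r and the submatrix of H with rows ρ(1),…,ρ(r) and columns σ(1),…,σ(r) equals G is exactly 2^{r(K−r)} · 2^{r(K'−r)}. -/
/-!
If the block `A` of `H = [[A, B], [C, D]]` is invertible, then `rank H = rank A` forces the Schur
complement `D - C A⁻¹ B` to vanish: a nonzero entry of it would border `A` to a larger invertible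
submatrix, by Schur's determinant formula. Conversely `[[A, B], [C, C A⁻¹ B]] = [1; C A⁻¹] [A B]`
has rank at most that of `A`. So the matrices of rank `rank A` with corner `A` are parametrized
freely by their off-diagonal blocks `B` and `C`, which gives the count once the rows and columns
are reordered so that `ρ` and `σ` become the leading indices.
-/

noncomputable def Function.Embedding.sumComplEquiv {ι κ : Type*} (f : ι ↪ κ)
    [DecidablePred (· ∈ Set.range f)] : ι ⊕ ↥(Set.range f)ᶜ ≃ κ :=
  ((Equiv.ofInjective f f.injective).sumCongr (Equiv.refl _)).trans (Equiv.Set.sumCompl _)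

@[simp]
theorem Function.Embedding.sumComplEquiv_inl {ι κ : Type*} (f : ι ↪ κ)
    [DecidablePred (· ∈ Set.range f)] (i : ι) : f.sumComplEquiv (Sum.inl i) = f i := by
  simp [Function.Embedding.sumComplEquiv]

theorem Function.Embedding.card_range_compl {ι κ : Type*} [Fintype ι] [Fintype κ]
    (f : ι ↪ κ) [Fintype ↥(Set.range f)ᶜ] :
    Fintype.card ↥(Set.range f)ᶜ = Fintype.card κ - Fintype.card ι := by
  classical
  rw [Fintype.card_compl_set, Set.card_range_of_injective f.injective]

namespace Matrix

variable {F : Type*} [Field F] {α β γ : Type*} [Fintype α] [Fintype γ] [DecidableEq α]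

theorem card_le_rank_fromBlocks {A : Matrix α α F} (hA : IsUnit A) (B : Matrix α γ F)
    (C : Matrix β α F) (D : Matrix β γ F) : Fintype.card α ≤ (fromBlocks A B C D).rank :=
  calc Fintype.card α = A.rank := (rank_of_isUnit A hA).symm
    _ ≤ _ := rank_submatrix_le (fromBlocks A B C D) Sum.inl Sum.inl

theorem rank_fromBlocks_mul_inv_mul {A : Matrix α α F} (hA : IsUnit A) (B : Matrix α γ F)
    (C : Matrix β α F) : (fromBlocks A B C (C * A⁻¹ * B)).rank = Fintype.card α := by
  refine le_antisymm ?_ (card_le_rank_fromBlocks hA _ _ _)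
  have hdet : IsUnit A.det := (isUnit_iff_isUnit_det A).mp hA
  have hfactor : fromBlocks A B C (C * A⁻¹ * B) = fromRows 1 (C * A⁻¹) * fromCols A B := by
    rw [fromRows_mul_fromCols, Matrix.mul_assoc, nonsing_inv_mul_cancel_right _ _ hdet,
      Matrix.one_mul, Matrix.one_mul]
  rw [hfactor]
  exact (rank_mul_le_left _ _).trans (rank_le_card_width _)

theorem eq_mul_inv_mul_of_rank_fromBlocks_le {A : Matrix α α F} (hA : IsUnit A)
    {B : Matrix α γ F} {C : Matrix β α F} {D : Matrix β γ F}
    (hrank : (fromBlocks A B C D).rank ≤ Fintype.card α) : D = C * A⁻¹ * B := by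
  by_contra hne
  obtain ⟨i, j, hij⟩ : ∃ i j, D i j ≠ (C * A⁻¹ * B) i j := by
    by_contra! h
    exact hne (Matrix.ext h)
  let := hA.invertible
  set M := (fromBlocks A B C D).submatrix (Sum.map id fun _ : Unit => i)
    (Sum.map id fun _ : Unit => j)
  have hM : M = fromBlocks A (B.submatrix id fun _ => j) (C.submatrix (fun _ => i) id)
      (of fun _ _ => D i j) := by
    ext (a | a) (b | b) <;> rfl
  have hdetM : IsUnit M.det := by
    rw [hM, det_fromBlocks₁₁, invOf_eq_nonsing_inv, det_unique (n := Unit)]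
    refine (isUnit_iff_isUnit_det A |>.mp hA).mul (isUnit_iff_ne_zero.mpr ?_)
    simpa [sub_eq_zero, Matrix.mul_apply] using hij
  have : Fintype.card α + 1 ≤ Fintype.card α :=
    calc Fintype.card α + 1 = M.rank := by
          rw [rank_of_isUnit M ((isUnit_iff_isUnit_det M).mpr hdetM)]; simp
      _ ≤ (fromBlocks A B C D).rank := rank_submatrix_le _ _ _
      _ ≤ Fintype.card α := hrank
  omega

theorem rank_fromBlocks_eq_card_iff {A : Matrix α α F} (hA : IsUnit A) (B : Matrix α γ F)
    (C : Matrix β α F) (D : Matrix β γ F) :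
    (fromBlocks A B C D).rank = Fintype.card α ↔ D = C * A⁻¹ * B :=
  ⟨fun h => eq_mul_inv_mul_of_rank_fromBlocks_le hA h.le,
    fun h => h ▸ rank_fromBlocks_mul_inv_mul hA B C⟩

theorem ncard_rank_eq_card_toBlocks₁₁_eq [Fintype β] [Fintype F] {A : Matrix α α F}
    (hA : IsUnit A) :
    {H : Matrix (α ⊕ β) (α ⊕ γ) F | H.rank = Fintype.card α ∧ H.toBlocks₁₁ = A}.ncard =
      Fintype.card F ^ (Fintype.card α * Fintype.card γ) *
        Fintype.card F ^ (Fintype.card α * Fintype.card β) := by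
  let extend : Matrix α γ F × Matrix β α F → Matrix (α ⊕ β) (α ⊕ γ) F :=
    fun p => fromBlocks A p.1 p.2 (p.2 * A⁻¹ * p.1)
  have hinj : extend.Injective := fun p q h => by
    simp only [extend, fromBlocks_inj] at h
    exact Prod.ext h.2.1 h.2.2.1
  have hrange : {H : Matrix (α ⊕ β) (α ⊕ γ) F | H.rank = Fintype.card α ∧ H.toBlocks₁₁ = A} =
      Set.range extend := by
    ext H
    obtain ⟨A', B, C, D, rfl⟩ : ∃ A' B C D, H = fromBlocks A' B C D :=
      ⟨_, _, _, _, (fromBlocks_toBlocks H).symm⟩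
    simp only [Set.mem_ofPred_eq, toBlocks_fromBlocks₁₁, Set.mem_range, Prod.exists, extend,
      fromBlocks_inj]
    constructor
    · rintro ⟨hrank, rfl⟩
      exact ⟨B, C, rfl, rfl, rfl, ((rank_fromBlocks_eq_card_iff hA B C D).1 hrank).symm⟩
    · rintro ⟨B, C, rfl, rfl, rfl, rfl⟩
      exact ⟨rank_fromBlocks_mul_inv_mul hA B C, rfl⟩
  rw [hrange, Set.ncard_range_of_injective hinj, Nat.card_prod]
  simp [Matrix, Nat.card_fun, ← pow_mul, mul_comm]

theorem ncard_rank_eq_card_submatrix_eq {ι m n : Type*} [Fintype ι] [DecidableEq ι] [Fintype m]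
    [Fintype n] [Fintype F] {G : Matrix ι ι F} (hG : IsUnit G) (ρ : ι ↪ m) (σ : ι ↪ n) :
    {H : Matrix m n F | H.rank = Fintype.card ι ∧ H.submatrix ρ σ = G}.ncard =
      Fintype.card F ^ (Fintype.card ι * (Fintype.card n - Fintype.card ι)) *
        Fintype.card F ^ (Fintype.card ι * (Fintype.card m - Fintype.card ι)) := by
  classical
  let split := reindex (α := F) ρ.sumComplEquiv.symm σ.sumComplEquiv.symm
  have hsplit : {H : Matrix m n F | H.rank = Fintype.card ι ∧ H.submatrix ρ σ = G} =
      split ⁻¹' {H | H.rank = Fintype.card ι ∧ H.toBlocks₁₁ = G} := by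
    ext H
    have h₁₁ : (H.submatrix ρ.sumComplEquiv σ.sumComplEquiv).toBlocks₁₁ = H.submatrix ρ σ := by
      ext; simp [toBlocks₁₁]
    simp only [Set.mem_ofPred_eq, Set.mem_preimage, split, reindex_apply, Equiv.symm_symm,
      rank_submatrix, h₁₁]
  rw [hsplit, Set.ncard_preimage_of_injective_subset_range split.injective (by simp),
    ncard_rank_eq_card_toBlocks₁₁_eq hG, ρ.card_range_compl, σ.card_range_compl]

end Matrix

theorem card_rank_eq_submatrix_eq_general (K K' r : ℕ)
    (G : Matrix (Fin r) (Fin r) (ZMod 2)) (hG : IsUnit G)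
    (ρ : Fin r ↪ Fin K') (σ : Fin r ↪ Fin K) :
    {H : Matrix (Fin K') (Fin K) (ZMod 2) |
        H.rank = r ∧ H.submatrix ρ σ = G}.ncard
      = 2 ^ (r * (K - r)) * 2 ^ (r * (K' - r)) := by
  simpa using Matrix.ncard_rank_eq_card_submatrix_eq hG ρ σ

/-- Counting the rank-`r` extensions of a prescribed invertible `r × r` submatrix `G`:
there are exactly `2^(r(K-r)) * 2^(r(K'-r))` matrices `H ∈ F₂^(K'×K)` of rank `r`
whose submatrix on the rows `ρ` and columns `σ` equals `G` (Appendix II of the paper). -/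
theorem card_rank_eq_submatrix_eq (K K' r : ℕ) (hK : 0 < K) (hK' : 0 < K')
    (hr : 0 < r) (hrK : r ≤ K) (hrK' : r ≤ K')
    (G : Matrix (Fin r) (Fin r) (ZMod 2)) (hG : IsUnit G)
    (ρ : Fin r ↪ Fin K') (σ : Fin r ↪ Fin K) :
    {H : Matrix (Fin K') (Fin K) (ZMod 2) |
        H.rank = r ∧ H.submatrix ρ σ = G}.ncard
      = 2 ^ (r * (K - r)) * 2 ^ (r * (K' - r)) :=
  card_rank_eq_submatrix_eq_general K K' r G hG ρ σ
end

section
/- Let K, K', r be positive integers with r ≤ K and r ≤ K', and for a matrix H ∈ F₂^{K'×K} of rank r let V(H) denote the set of pairs (T, S) with T ⊆ {1,…,K'}, S ⊆ {1,…,K}, |T| = |S| = r, such that the r×r submatrix of H with rows T and columns S (taken in increasing order) has rank r. Fix an invertible matrix G ∈ F₂^{r×r}. Then for any two pairs (T₁, S₁) and (T₂, S₂) of subsets with |T₁| = |S₁| = |T₂| = |S₂| = r, the sums ∑ 1/|V(H)| over all H ∈ F₂^{K'×K} with rank(H) = r whose submatrix with rows T₁, columns S₁ equals G, and over all H with rank(H)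 = r whose submatrix with rows T₂, columns S₂ equals G, are equal. -/
/-!
Pick permutations `σ` of the rows and `τ` of the columns sending the `i`-th element of `T₂`
(resp. `S₂`) to the `i`-th element of `T₁` (resp. `S₁`). Then `H ↦ H.submatrix σ τ` is a
bijection of `F₂^{K'×K}` that preserves rank, moves the block at `(T₁, S₁)` to `(T₂, S₂)`, and
only relabels the pairs in `V(H)` (a submatrix's rank does not see the order of its rows and
columns), so it matches the two sums term by term.
-/

/-- The set `V(H)` of the paper: pairs of a row-index set `T` and a column-index set
`S`, each of size `r`, such that the `r × r` submatrix of `H` on rows `T` and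
columns `S` (taken in increasing order) has rank `r`. -/
def fullRankPairs (K K' r : ℕ) (H : Matrix (Fin K') (Fin K) (ZMod 2)) :
    Set (Finset (Fin K') × Finset (Fin K)) :=
  {TS | ∃ (hT : TS.1.card = r) (hS : TS.2.card = r),
    (H.submatrix (TS.1.orderEmbOfFin hT) (TS.2.orderEmbOfFin hS)).rank = r}

namespace Matrix

variable {m n R : Type*} [CommRing R]

theorem rank_submatrix_orderEmbOfFin [LinearOrder m] [LinearOrder n] [Fintype n]
    (A : Matrix m n R) {r : ℕ} (T : Finset m) (S : Finset n) (hT : T.card = r) (hS : S.card = r) :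
    (A.submatrix (T.orderEmbOfFin hT) (S.orderEmbOfFin hS)).rank =
      (A.submatrix ((↑) : T → m) ((↑) : S → n)).rank := by
  rw [← rank_submatrix _ (T.orderIsoOfFin hT).toEquiv (S.orderIsoOfFin hS).toEquiv]
  rfl

theorem rank_submatrix_submatrix_coe_finset {m' n' : Type*} [Fintype n] [Fintype n']
    (A : Matrix m n R) (σ : m' ≃ m) (τ : n' ≃ n) (T : Finset m') (S : Finset n') :
    ((A.submatrix σ τ).submatrix ((↑) : T → m') ((↑) : S → n')).rank =
      (A.submatrix ((↑) : T.map σ.toEmbedding → m) ((↑) : S.map τ.toEmbedding → n)).rank := by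
  rw [← rank_submatrix _ (σ.subtypeEquiv (p := (· ∈ T)) fun a => by simp)
    (τ.subtypeEquiv (p := (· ∈ S)) fun a => by simp)]
  rfl

end Matrix

section

variable {K K' r : ℕ}

theorem mem_fullRankPairs_iff {H : Matrix (Fin K') (Fin K) (ZMod 2)} {T : Finset (Fin K')}
    {S : Finset (Fin K)} :
    (T, S) ∈ fullRankPairs K K' r H ↔
      ∃ (_ : T.card = r) (_ : S.card = r),
        (H.submatrix ((↑) : T → Fin K') ((↑) : S → Fin K)).rank = r := by
  simp only [fullRankPairs, Set.mem_ofPred_eq, Matrix.rank_submatrix_orderEmbOfFin]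

theorem mem_fullRankPairs_submatrix_iff (H : Matrix (Fin K') (Fin K) (ZMod 2))
    (σ : Equiv.Perm (Fin K')) (τ : Equiv.Perm (Fin K)) (T : Finset (Fin K')) (S : Finset (Fin K)) :
    (T, S) ∈ fullRankPairs K K' r (H.submatrix σ τ) ↔
      (T.map σ.toEmbedding, S.map τ.toEmbedding) ∈ fullRankPairs K K' r H := by
  simp only [mem_fullRankPairs_iff, Matrix.rank_submatrix_submatrix_coe_finset, Finset.card_map]

theorem ncard_fullRankPairs_submatrix (H : Matrix (Fin K') (Fin K) (ZMod 2))
    (σ : Equiv.Perm (Fin K')) (τ : Equiv.Perm (Fin K)) :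
    (fullRankPairs K K' r (H.submatrix σ τ)).ncard = (fullRankPairs K K' r H).ncard := by
  let e := σ.finsetCongr.prodCongr τ.finsetCongr
  have hpre : fullRankPairs K K' r (H.submatrix σ τ) = e ⁻¹' fullRankPairs K K' r H := by
    ext ⟨T, S⟩
    exact mem_fullRankPairs_submatrix_iff H σ τ T S
  rw [hpre, Set.ncard_preimage_of_injective_subset_range e.injective (by simp)]

end

open Finset Classical in
theorem sum_inv_ncard_fullRankPairs_loc_indep_general (K K' r : ℕ)
    (G : Matrix (Fin r) (Fin r) (ZMod 2))
    (T₁ T₂ : Finset (Fin K')) (S₁ S₂ : Finset (Fin K))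
    (hT₁ : T₁.card = r) (hS₁ : S₁.card = r) (hT₂ : T₂.card = r) (hS₂ : S₂.card = r) :
    ∑ H ∈ univ.filter (fun H : Matrix (Fin K') (Fin K) (ZMod 2) =>
        H.rank = r ∧ H.submatrix (T₁.orderEmbOfFin hT₁) (S₁.orderEmbOfFin hS₁) = G),
      (1 : ℝ) / (fullRankPairs K K' r H).ncard
    = ∑ H ∈ univ.filter (fun H : Matrix (Fin K') (Fin K) (ZMod 2) =>
        H.rank = r ∧ H.submatrix (T₂.orderEmbOfFin hT₂) (S₂.orderEmbOfFin hS₂) = G),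
      (1 : ℝ) / (fullRankPairs K K' r H).ncard := by
  obtain ⟨σ, hσ⟩ := Equiv.Perm.exists_extending_pair _ _
    (T₂.orderEmbOfFin hT₂).injective (T₁.orderEmbOfFin hT₁).injective
  obtain ⟨τ, hτ⟩ := Equiv.Perm.exists_extending_pair _ _
    (S₂.orderEmbOfFin hS₂).injective (S₁.orderEmbOfFin hS₁).injective
  have hblock : ∀ H : Matrix (Fin K') (Fin K) (ZMod 2),
      (H.submatrix σ τ).submatrix (T₂.orderEmbOfFin hT₂) (S₂.orderEmbOfFin hS₂) =
        H.submatrix (T₁.orderEmbOfFin hT₁) (S₁.orderEmbOfFin hS₁) := by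
    intro H
    ext i j
    simp [hσ, hτ]
  refine sum_equiv (Matrix.reindex σ.symm τ.symm) (fun H => ?_) (fun H _ => ?_)
  · simp [Matrix.reindex_apply, hblock]
  · simp [Matrix.reindex_apply, ncard_fullRankPairs_submatrix]

open Finset Classical in
/-- First property in the proof of Lemma 5 (Appendix II): the weighted count
`∑_H 1/|V(H)|` of rank-`r` extensions of an invertible `G` does not depend on the
location `(T, S)` of the prescribed submatrix. -/
theorem sum_inv_ncard_fullRankPairs_loc_indep (K K' r : ℕ)
    (hK : 0 < K) (hK' : 0 < K') (hr : 0 < r) (hrK : r ≤ K) (hrK' : r ≤ K')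
    (G : Matrix (Fin r) (Fin r) (ZMod 2)) (hG : IsUnit G)
    (T₁ T₂ : Finset (Fin K')) (S₁ S₂ : Finset (Fin K))
    (hT₁ : T₁.card = r) (hS₁ : S₁.card = r) (hT₂ : T₂.card = r) (hS₂ : S₂.card = r) :
    ∑ H ∈ univ.filter (fun H : Matrix (Fin K') (Fin K) (ZMod 2) =>
        H.rank = r ∧ H.submatrix (T₁.orderEmbOfFin hT₁) (S₁.orderEmbOfFin hS₁) = G),
      (1 : ℝ) / (fullRankPairs K K' r H).ncard
    = ∑ H ∈ univ.filter (fun H : Matrix (Fin K') (Fin K) (ZMod 2) =>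
        H.rank = r ∧ H.submatrix (T₂.orderEmbOfFin hT₂) (S₂.orderEmbOfFin hS₂) = G),
      (1 : ℝ) / (fullRankPairs K K' r H).ncard :=
  sum_inv_ncard_fullRankPairs_loc_indep_general K K' r G T₁ T₂ S₁ S₂ hT₁ hS₁ hT₂ hS₂
end

section
/- Let K, K', r be positive integers with r ≤ K and r ≤ K', and for a matrix H ∈ F₂^{K'×K} of rank r let V(H) denote the set of pairs (T, S) with T ⊆ {1,…,K'}, S ⊆ {1,…,K}, |T| = |S| = r, such that the r×r submatrix of H with rows T and columns S (taken in increasing order) has rank r. Fix subsets T ⊆ {1,…,K'} and S ⊆ {1,…,K} with |T| = |S| = r. Then for any two invertible matrices G₁, G₂ ∈ F₂^{r×r}, the sums ∑ 1/|V(H)| over all H ∈ F₂^{K'×K} with rank(H) = r whose submatrix with rows T and columns S equals G₁, respectively equals G₂, are equal. -/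
/-!
If `H` has rank `r` and its `T × S` block `G` is invertible, then `H = C G⁻¹ R`, where `C` and `R`
are the columns `S` and the rows `T` of `H`. Hence `H = L G R'` for a unique pair `(L, R')` whose
`T`-rows of `L` and `S`-columns of `R'` form the identity, and conversely every such `L G R'` has
rank `r` and `T × S` block `G`. Every `r × r` block of `L G R'` has the form `L₀ G R₀`, which is
invertible iff `L₀` and `R₀` are; so `V(L G R')` does not depend on `G`, and both sums equal the
same sum over the pairs `(L, R')`.
-/

open Finset

namespace Matrix

variable {𝕜 : Type*} [Field 𝕜] {m n ι : Type*} [Fintype n] [Fintype ι]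

theorem rank_eq_card_iff_isUnit [DecidableEq n] (A : Matrix n n 𝕜) :
    A.rank = Fintype.card n ↔ IsUnit A := by
  refine ⟨fun h => ?_, fun h => A.rank_of_isUnit h⟩
  rw [← mulVec_surjective_iff_isUnit]
  refine LinearMap.range_eq_top.mp (Submodule.eq_top_of_finrank_eq (S := A.mulVecLin.range) ?_)
  rw [Module.finrank_fintype_fun_eq_card]
  exact h

theorem rank_mul_mul_eq_card_iff [DecidableEq ι] {X A Y : Matrix ι ι 𝕜} (hA : IsUnit A) :
    (X * A * Y).rank = Fintype.card ι ↔ IsUnit X ∧ IsUnit Y := by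
  simp only [rank_eq_card_iff_isUnit, isUnit_iff_isUnit_det, IsUnit.mul_iff,
    (isUnit_iff_isUnit_det A).mp hA, and_true]

theorem exists_eq_mul_of_range_le {A : Matrix m n 𝕜} {C : Matrix m ι 𝕜} [DecidableEq n]
    (h : LinearMap.range A.mulVecLin ≤ LinearMap.range C.mulVecLin) : ∃ N, A = C * N := by
  choose v hv using fun j => h (LinearMap.mem_range_self A.mulVecLin (Pi.single j 1))
  refine ⟨(Matrix.of v)ᵀ, ext fun i j => ?_⟩
  have := congrFun (hv j) i
  simp only [mulVecLin_apply, mulVec_single_one] at this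
  exact this.symm

omit [Fintype n] in
theorem submatrix_mul_mul {l o : Type*} (L : Matrix m ι 𝕜) (G : Matrix ι ι 𝕜) (R : Matrix ι n 𝕜)
    (f : l → m) (g : o → n) :
    (L * G * R).submatrix f g = L.submatrix f id * G * R.submatrix id g := by
  rw [submatrix_mul _ _ f id g Function.bijective_id, submatrix_mul _ _ f id id
    Function.bijective_id, submatrix_id_id]

theorem eq_submatrix_mul_inv_mul_submatrix [Fintype m] [DecidableEq ι] (A : Matrix m n 𝕜)
    (f : ι → m) (g : ι → n) (hA : A.rank ≤ Fintype.card ι) (hG : IsUnit (A.submatrix f g)) :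
    A = A.submatrix id g * (A.submatrix f g)⁻¹ * A.submatrix f id := by
  classical
  have hcols : Submodule.span 𝕜 (Set.range (A.submatrix id g).col) ≤
      Submodule.span 𝕜 (Set.range A.col) :=
    Submodule.span_mono (Set.range_subset_iff.2 fun i => ⟨g i, rfl⟩)
  have hrank : A.rank ≤ (A.submatrix id g).rank := calc
    A.rank ≤ Fintype.card ι := hA
    _ = (A.submatrix f g).rank := (rank_of_isUnit _ hG).symm
    _ ≤ (A.submatrix id g).rank := by
      simpa using rank_submatrix_le (A.submatrix id g) f id
  obtain ⟨N, hN⟩ : ∃ N : Matrix ι n 𝕜, A = A.submatrix id g * N := by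
    refine exists_eq_mul_of_range_le ?_
    rw [range_mulVecLin, range_mulVecLin]
    refine (Submodule.eq_of_le_of_finrank_le hcols ?_).ge
    simpa only [rank_eq_finrank_span_cols] using hrank
  have hrow : A.submatrix f id = A.submatrix f g * N := by
    conv_lhs => rw [hN]
    rw [submatrix_mul _ _ f id id Function.bijective_id, submatrix_id_id, submatrix_submatrix]
    rfl
  rw [hrow, Matrix.mul_assoc, nonsing_inv_mul_cancel_left _ _ ((isUnit_iff_isUnit_det _).mp hG)]
  exact hN

theorem sum_filter_rank_submatrix_eq [Fintype m] [DecidableEq m] [DecidableEq n] [DecidableEq ι]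
    [Fintype 𝕜] [DecidableEq 𝕜] {M : Type*} [AddCommMonoid M] (φ : Matrix m n 𝕜 → M)
    (f : ι → m) (g : ι → n) {G : Matrix ι ι 𝕜} (hG : IsUnit G) :
    ∑ H with H.rank = Fintype.card ι ∧ H.submatrix f g = G, φ H =
      ∑ LR : Matrix m ι 𝕜 × Matrix ι n 𝕜 with LR.1.submatrix f id = 1 ∧ LR.2.submatrix id g = 1,
        φ (LR.1 * G * LR.2) := by
  have hdet := (isUnit_iff_isUnit_det G).mp hG
  have factor : ∀ H : Matrix m n 𝕜, H.rank = Fintype.card ι ∧ H.submatrix f g = G →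
      H.submatrix id g * G⁻¹ * G * (G⁻¹ * H.submatrix f id) = H := by
    rintro H ⟨hrank, rfl⟩
    rw [nonsing_inv_mul_cancel_right _ _ hdet, ← Matrix.mul_assoc]
    exact (eq_submatrix_mul_inv_mul_submatrix H f g hrank.le hG).symm
  refine Finset.sum_nbij' (fun H => (H.submatrix id g * G⁻¹, G⁻¹ * H.submatrix f id))
    (fun LR => LR.1 * G * LR.2) ?_ ?_ (fun H hH => factor H (mem_filter.mp hH).2) ?_
    (fun H hH => congrArg φ (factor H (mem_filter.mp hH).2).symm)
  · simp only [mem_filter, mem_univ, true_and]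
    rintro H ⟨-, rfl⟩
    simp [submatrix_mul _ _ f id id Function.bijective_id,
      submatrix_mul _ _ id id g Function.bijective_id, mul_nonsing_inv _ hdet,
      nonsing_inv_mul _ hdet]
  · simp only [mem_filter, mem_univ, true_and]
    rintro ⟨L, R⟩ ⟨hL, hR⟩
    have hsub : (L * G * R).submatrix f g = G := by
      rw [submatrix_mul_mul, hL, hR, Matrix.one_mul, Matrix.mul_one]
    refine ⟨le_antisymm ?_ ?_, hsub⟩
    · exact (rank_mul_le_left _ _).trans ((rank_mul_le_left _ _).trans L.rank_le_card_width)
    · calc Fintype.card ι = G.rank := (rank_of_isUnit G hG).symm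
        _ = ((L * G * R).submatrix f g).rank := by rw [hsub]
        _ ≤ (L * G * R).rank := rank_submatrix_le _ f g
  · simp only [mem_filter, mem_univ, true_and]
    rintro ⟨L, R⟩ ⟨hL, hR⟩
    rw [submatrix_mul_mul, submatrix_mul_mul, hL, hR, submatrix_id_id, submatrix_id_id,
      Matrix.mul_one, Matrix.one_mul, mul_nonsing_inv_cancel_right _ _ hdet,
      nonsing_inv_mul_cancel_left _ _ hdet]

end Matrix

open Matrix in
theorem fullRankPairs_mul_mul_congr {K K' r : ℕ} (L : Matrix (Fin K') (Fin r) (ZMod 2))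
    (R : Matrix (Fin r) (Fin K) (ZMod 2)) {A B : Matrix (Fin r) (Fin r) (ZMod 2)}
    (hA : IsUnit A) (hB : IsUnit B) :
    fullRankPairs K K' r (L * A * R) = fullRankPairs K K' r (L * B * R) := by
  have full_rank_iff : ∀ {C : Matrix (Fin r) (Fin r) (ZMod 2)}, IsUnit C →
      ∀ X Y : Matrix (Fin r) (Fin r) (ZMod 2), (X * C * Y).rank = r ↔ IsUnit X ∧ IsUnit Y :=
    fun hC X Y => by simpa using rank_mul_mul_eq_card_iff (X := X) (Y := Y) hC
  ext TS
  simp only [fullRankPairs, submatrix_mul_mul, full_rank_iff hA, full_rank_iff hB]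

open Finset Classical in
theorem sum_inv_ncard_fullRankPairs_G_indep_general (K K' r : ℕ)
    (T : Finset (Fin K')) (S : Finset (Fin K))
    (hT : T.card = r) (hS : S.card = r)
    (G₁ G₂ : Matrix (Fin r) (Fin r) (ZMod 2)) (hG₁ : IsUnit G₁) (hG₂ : IsUnit G₂) :
    ∑ H ∈ univ.filter (fun H : Matrix (Fin K') (Fin K) (ZMod 2) =>
        H.rank = r ∧ H.submatrix (T.orderEmbOfFin hT) (S.orderEmbOfFin hS) = G₁),
      (1 : ℝ) / (fullRankPairs K K' r H).ncard
    = ∑ H ∈ univ.filter (fun H : Matrix (Fin K') (Fin K) (ZMod 2) =>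
        H.rank = r ∧ H.submatrix (T.orderEmbOfFin hT) (S.orderEmbOfFin hS) = G₂),
      (1 : ℝ) / (fullRankPairs K K' r H).ncard := by
  have hsum := fun {G} (hG : IsUnit G) => Matrix.sum_filter_rank_submatrix_eq
    (fun H => (1 : ℝ) / (fullRankPairs K K' r H).ncard) (T.orderEmbOfFin hT)
    (S.orderEmbOfFin hS) hG
  simp only [Fintype.card_fin] at hsum
  rw [hsum hG₁, hsum hG₂]
  exact sum_congr rfl fun LR _ => by rw [fullRankPairs_mul_mul_congr LR.1 LR.2 hG₁ hG₂]

open Finset Classical in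
/-- Second property in the proof of Lemma 5 (Appendix II): the weighted count
`∑_H 1/|V(H)|` of rank-`r` extensions of an invertible `r × r` matrix depends only
on its rank, not on the matrix itself. -/
theorem sum_inv_ncard_fullRankPairs_G_indep (K K' r : ℕ)
    (hK : 0 < K) (hK' : 0 < K') (hr : 0 < r) (hrK : r ≤ K) (hrK' : r ≤ K')
    (T : Finset (Fin K')) (S : Finset (Fin K))
    (hT : T.card = r) (hS : S.card = r)
    (G₁ G₂ : Matrix (Fin r) (Fin r) (ZMod 2)) (hG₁ : IsUnit G₁) (hG₂ : IsUnit G₂) :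
    ∑ H ∈ univ.filter (fun H : Matrix (Fin K') (Fin K) (ZMod 2) =>
        H.rank = r ∧ H.submatrix (T.orderEmbOfFin hT) (S.orderEmbOfFin hS) = G₁),
      (1 : ℝ) / (fullRankPairs K K' r H).ncard
    = ∑ H ∈ univ.filter (fun H : Matrix (Fin K') (Fin K) (ZMod 2) =>
        H.rank = r ∧ H.submatrix (T.orderEmbOfFin hT) (S.orderEmbOfFin hS) = G₂),
      (1 : ℝ) / (fullRankPairs K K' r H).ncard :=
  sum_inv_ncard_fullRankPairs_G_indep_general K K' r T S hT hS G₁ G₂ hG₁ hG₂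
end
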